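/- arXiv:gr-qc/0405039 — 3 statements merged into one kernel-verified Lean document; each statement's English description precedes it below -/
import Mathlib

section
/- Let μ, λ, φ : I × ℝ → ℝ be C² functions (t denotes the first variable, r the second; dot and prime denote ∂_t and ∂_r). Define X = φ̇ e^{-μ} − φ' e^{-λ}, Y = φ̇ e^{-μ} + φ' e^{-λ}, the operators D⁺ = e^{-μ}∂_t + e^{-λ}∂_r and D⁻ = e^{-μ}∂_t − e^{-λ}∂_r, and coefficients a = (−λ̇ − 1/t) e^{-μ} − μ' e^{-λ}, b = −e^{-μ}/t, c = (−λ̇ − 1/t) e^{-μ} + μ' e^{-λ}. If φ satisfies the wave equation e^{-2λ} φ'' − e^{-2μ} φ̈ − e^{-2μ}(λ̇ − μ̇ + 2/t) φ̇ − e^{-2λ}(λ' − μ') φ' = 0 on I × ℝ with I ⊆ (0,∞), then D⁺X = aX + bY and D⁻Y = bX + cY on I × ℝ. -/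
/-!
Expanding `D⁺X` and `D⁻Y` by the product rule produces only the second derivatives
`φ̈`, `φ''`, `φ̇'` and `φ'˙`. The mixed ones cancel by the symmetry of second
derivatives of a `C²` function, and the combination `e^{-2μ} φ̈ - e^{-2λ} φ''` that
remains is eliminated with the wave equation; what is left is an algebraic identity
in `e^{-μ}` and `e^{-λ}`.
-/

open Real Set

/-- partial derivative with respect to the first (time) variable -/
noncomputable def pd1 (f : ℝ → ℝ → ℝ) (t r : ℝ) : ℝ := deriv (fun τ => f τ r) t

/-- partial derivative with respect to the second (space) variable -/
noncomputable def pd2 (f : ℝ → ℝ → ℝ) (t r : ℝ) : ℝ := deriv (fun ρ => f t ρ) r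

open Function

theorem fderiv_fderiv_apply {𝕜 E F : Type*} [NontriviallyNormedField 𝕜]
    [NormedAddCommGroup E] [NormedSpace 𝕜 E] [NormedAddCommGroup F] [NormedSpace 𝕜 F]
    {g : E → F} {x : E} (hg : DifferentiableAt 𝕜 (fderiv 𝕜 g) x) (v w : E) :
    fderiv 𝕜 (fun y => fderiv 𝕜 g y v) x w = fderiv 𝕜 (fderiv 𝕜 g) x w v := by
  rw [fderiv_clm_apply hg (differentiableAt_const v)]
  simp

section PartialDerivatives

variable {f : ℝ → ℝ → ℝ} {t r : ℝ}

theorem hasDerivAt_fderiv_fst (hf : DifferentiableAt ℝ (uncurry f) (t, r)) :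
    HasDerivAt (fun τ => f τ r) (fderiv ℝ (uncurry f) (t, r) (1, 0)) t :=
  hf.hasFDerivAt.comp_hasDerivAt (f := fun τ => (τ, r)) t
    ((hasDerivAt_id t).prodMk (hasDerivAt_const t r))

theorem hasDerivAt_fderiv_snd (hf : DifferentiableAt ℝ (uncurry f) (t, r)) :
    HasDerivAt (fun ρ => f t ρ) (fderiv ℝ (uncurry f) (t, r) (0, 1)) r :=
  hf.hasFDerivAt.comp_hasDerivAt (f := fun ρ => (t, ρ)) r
    ((hasDerivAt_const r t).prodMk (hasDerivAt_id r))

theorem pd1_eq_fderiv (hf : DifferentiableAt ℝ (uncurry f) (t, r)) :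
    pd1 f t r = fderiv ℝ (uncurry f) (t, r) (1, 0) :=
  (hasDerivAt_fderiv_fst hf).deriv

theorem pd2_eq_fderiv (hf : DifferentiableAt ℝ (uncurry f) (t, r)) :
    pd2 f t r = fderiv ℝ (uncurry f) (t, r) (0, 1) :=
  (hasDerivAt_fderiv_snd hf).deriv

theorem hasDerivAt_pd1 (hf : DifferentiableAt ℝ (uncurry f) (t, r)) :
    HasDerivAt (fun τ => f τ r) (pd1 f t r) t :=
  pd1_eq_fderiv hf ▸ hasDerivAt_fderiv_fst hf

theorem hasDerivAt_pd2 (hf : DifferentiableAt ℝ (uncurry f) (t, r)) :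
    HasDerivAt (fun ρ => f t ρ) (pd2 f t r) r :=
  pd2_eq_fderiv hf ▸ hasDerivAt_fderiv_snd hf

theorem uncurry_pd1 (hf : Differentiable ℝ (uncurry f)) :
    uncurry (pd1 f) = fun p => fderiv ℝ (uncurry f) p (1, 0) :=
  funext fun p => pd1_eq_fderiv (hf p)

theorem uncurry_pd2 (hf : Differentiable ℝ (uncurry f)) :
    uncurry (pd2 f) = fun p => fderiv ℝ (uncurry f) p (0, 1) :=
  funext fun p => pd2_eq_fderiv (hf p)

theorem contDiff_uncurry_pd1 {n : WithTop ℕ∞} (hf : ContDiff ℝ (n + 1) (uncurry f)) :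
    ContDiff ℝ n (uncurry (pd1 f)) := by
  rw [uncurry_pd1 (hf.differentiable (by simp))]
  exact (hf.fderiv_right le_rfl).clm_apply contDiff_const

theorem contDiff_uncurry_pd2 {n : WithTop ℕ∞} (hf : ContDiff ℝ (n + 1) (uncurry f)) :
    ContDiff ℝ n (uncurry (pd2 f)) := by
  rw [uncurry_pd2 (hf.differentiable (by simp))]
  exact (hf.fderiv_right le_rfl).clm_apply contDiff_const

theorem pd1_pd2_comm (hf : ContDiff ℝ 2 (uncurry f)) : pd1 (pd2 f) t r = pd2 (pd1 f) t r := by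
  have hf' : ContDiff ℝ 1 (fderiv ℝ (uncurry f)) := hf.fderiv_right le_rfl
  rw [pd1_eq_fderiv ((contDiff_uncurry_pd2 hf).differentiable one_ne_zero _),
    pd2_eq_fderiv ((contDiff_uncurry_pd1 hf).differentiable one_ne_zero _),
    uncurry_pd1 (hf.differentiable two_ne_zero), uncurry_pd2 (hf.differentiable two_ne_zero),
    fderiv_fderiv_apply (hf'.differentiable one_ne_zero _),
    fderiv_fderiv_apply (hf'.differentiable one_ne_zero _)]
  exact (hf.contDiffAt.isSymmSndFDerivAt (by simp)).eq _ _

end PartialDerivatives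

section ExpWeights

variable {u m : ℝ → ℝ → ℝ} {t r : ℝ}

theorem hasDerivAt_mul_exp_neg_fst (hu : DifferentiableAt ℝ (uncurry u) (t, r))
    (hm : DifferentiableAt ℝ (uncurry m) (t, r)) :
    HasDerivAt (fun τ => u τ r * exp (-m τ r))
      ((pd1 u t r - u t r * pd1 m t r) * exp (-m t r)) t :=
  ((hasDerivAt_pd1 hu).fun_mul (hasDerivAt_pd1 hm).fun_neg.exp).congr_deriv (by ring)

theorem hasDerivAt_mul_exp_neg_snd (hu : DifferentiableAt ℝ (uncurry u) (t, r))
    (hm : DifferentiableAt ℝ (uncurry m) (t, r)) :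
    HasDerivAt (fun ρ => u t ρ * exp (-m t ρ))
      ((pd2 u t r - u t r * pd2 m t r) * exp (-m t r)) r :=
  ((hasDerivAt_pd2 hu).fun_mul (hasDerivAt_pd2 hm).fun_neg.exp).congr_deriv (by ring)

end ExpWeights

theorem wave_equation_to_characteristic_system_general
    (I : Set ℝ)
    (μ lam φ : ℝ → ℝ → ℝ)
    (hμ : ContDiff ℝ 2 (Function.uncurry μ))
    (hlam : ContDiff ℝ 2 (Function.uncurry lam))
    (hφ : ContDiff ℝ 2 (Function.uncurry φ))
    -- the wave equation
    (hwave : ∀ t ∈ I, ∀ r : ℝ,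
      Real.exp (-2 * lam t r) * pd2 (pd2 φ) t r
      - Real.exp (-2 * μ t r) * pd1 (pd1 φ) t r
      - Real.exp (-2 * μ t r) * (pd1 lam t r - pd1 μ t r + 2 / t) * pd1 φ t r
      - Real.exp (-2 * lam t r) * (pd2 lam t r - pd2 μ t r) * pd2 φ t r = 0) :
    ∀ t ∈ I, ∀ r : ℝ,
      -- X, Y, a, b, c
      (fun X Y a b c =>
        (Real.exp (-μ t r) * pd1 X t r + Real.exp (-lam t r) * pd2 X t r
          = a * X t r + b * Y t r) ∧
        (Real.exp (-μ t r) * pd1 Y t r - Real.exp (-lam t r) * pd2 Y t r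
          = b * X t r + c * Y t r))
      (fun t r => pd1 φ t r * Real.exp (-μ t r) - pd2 φ t r * Real.exp (-lam t r))
      (fun t r => pd1 φ t r * Real.exp (-μ t r) + pd2 φ t r * Real.exp (-lam t r))
      ((-pd1 lam t r - 1 / t) * Real.exp (-μ t r) - pd2 μ t r * Real.exp (-lam t r))
      (-(Real.exp (-μ t r)) / t)
      ((-pd1 lam t r - 1 / t) * Real.exp (-μ t r) + pd2 μ t r * Real.exp (-lam t r)) := by
  intro t ht r
  set X : ℝ → ℝ → ℝ := fun t r => pd1 φ t r * exp (-μ t r) - pd2 φ t r * exp (-lam t r)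
  set Y : ℝ → ℝ → ℝ := fun t r => pd1 φ t r * exp (-μ t r) + pd2 φ t r * exp (-lam t r)
  have hdiff {f : ℝ → ℝ → ℝ} (hf : ContDiff ℝ 1 (uncurry f)) :
      DifferentiableAt ℝ (uncurry f) (t, r) :=
    hf.differentiable one_ne_zero _
  have hμ' := hdiff (hμ.of_le one_le_two)
  have hlam' := hdiff (hlam.of_le one_le_two)
  have hφ₁ := hdiff (contDiff_uncurry_pd1 hφ)
  have hφ₂ := hdiff (contDiff_uncurry_pd2 hφ)
  have hA₁ := hasDerivAt_mul_exp_neg_fst hφ₁ hμ'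
  have hA₂ := hasDerivAt_mul_exp_neg_snd hφ₁ hμ'
  have hB₁ := hasDerivAt_mul_exp_neg_fst hφ₂ hlam'
  have hB₂ := hasDerivAt_mul_exp_neg_snd hφ₂ hlam'
  have hexp (x : ℝ) : exp (-2 * x) = exp (-x) ^ 2 := by rw [sq, ← exp_add]; ring_nf
  have hw := hwave t ht r
  rw [hexp, hexp] at hw
  constructor
  · rw [show pd1 X t r = _ from (hA₁.fun_sub hB₁).deriv,
      show pd2 X t r = _ from (hA₂.fun_sub hB₂).deriv]
    linear_combination -hw - exp (-μ t r) * exp (-lam t r) * pd1_pd2_comm hφ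
  · rw [show pd1 Y t r = _ from (hA₁.fun_add hB₁).deriv,
      show pd2 Y t r = _ from (hA₂.fun_add hB₂).deriv]
    linear_combination -hw + exp (-μ t r) * exp (-lam t r) * pd1_pd2_comm hφ

theorem wave_equation_to_characteristic_system
    (I : Set ℝ) (hI : I ⊆ Set.Ioi 0)
    (μ lam φ : ℝ → ℝ → ℝ)
    (hμ : ContDiff ℝ 2 (Function.uncurry μ))
    (hlam : ContDiff ℝ 2 (Function.uncurry lam))
    (hφ : ContDiff ℝ 2 (Function.uncurry φ))
    -- the wave equation
    (hwave : ∀ t ∈ I, ∀ r : ℝ,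
      Real.exp (-2 * lam t r) * pd2 (pd2 φ) t r
      - Real.exp (-2 * μ t r) * pd1 (pd1 φ) t r
      - Real.exp (-2 * μ t r) * (pd1 lam t r - pd1 μ t r + 2 / t) * pd1 φ t r
      - Real.exp (-2 * lam t r) * (pd2 lam t r - pd2 μ t r) * pd2 φ t r = 0) :
    ∀ t ∈ I, ∀ r : ℝ,
      -- X, Y, a, b, c
      (fun X Y a b c =>
        (Real.exp (-μ t r) * pd1 X t r + Real.exp (-lam t r) * pd2 X t r
          = a * X t r + b * Y t r) ∧
        (Real.exp (-μ t r) * pd1 Y t r - Real.exp (-lam t r) * pd2 Y t r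
          = b * X t r + c * Y t r))
      (fun t r => pd1 φ t r * Real.exp (-μ t r) - pd2 φ t r * Real.exp (-lam t r))
      (fun t r => pd1 φ t r * Real.exp (-μ t r) + pd2 φ t r * Real.exp (-lam t r))
      ((-pd1 lam t r - 1 / t) * Real.exp (-μ t r) - pd2 μ t r * Real.exp (-lam t r))
      (-(Real.exp (-μ t r)) / t)
      ((-pd1 lam t r - 1 / t) * Real.exp (-μ t r) + pd2 μ t r * Real.exp (-lam t r)) :=
  wave_equation_to_characteristic_system_general I μ lam φ hμ hlam hφ hwave
end

section
/- Let p̄ : I × ℝ → [0,∞) be continuous with I ⊆ (0,∞), 1 ∈ I, let μ̊ : ℝ → ℝ be C¹, and suppose the expression E(t,r) = (e^{−2μ̊(r)} + k)/t − k + (8π/t) ∫_t^1 s² p̄(s,r) ds is strictly positive on I × ℝ. Then μ(t,r) := −(1/2) log E(t,r) is the unique C¹ (in t) function with μ(1,r) = μ̊(r) satisfying the field equation e^{−2μ}(2t ∂_t μ − 1) − k = 8π t² p̄ on I × ℝ. -/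
/-!
Writing `Y(τ) = τ e^{-2μ(τ)}`, the field equation becomes the linear equation
`Y' = -(k + 8π τ² p̄)`, since `(τ e^{-2μ})' = -e^{-2μ} (2τμ' - 1)`. The explicit `μ` is the one
with `Y(τ) = e^{-2μ̊} - ∫_1^τ (k + 8π s² p̄)`, i.e. `e^{-2μ} = E`; any other solution on the
interval `I` differs from it in `Y` by a function with vanishing derivative, which is zero
because both agree at `τ = 1`.
-/

open Real Set Filter Topology

theorem Set.OrdConnected.eq_of_hasDerivAt_eq_zero {I : Set ℝ} (hI : I.OrdConnected)
    {φ : ℝ → ℝ} (hc : ContinuousOn φ I) (hd : ∀ x ∈ interior I, HasDerivAt φ 0 x)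
    {a b : ℝ} (ha : a ∈ I) (hb : b ∈ I) : φ a = φ b := by
  wlog hab : a ≤ b generalizing a b
  · exact (this hb ha (le_of_not_ge hab)).symm
  have hdiff : DifferentiableOn ℝ φ (interior I) := fun x hx =>
    (hd x hx).differentiableAt.differentiableWithinAt
  exact le_antisymm
    (monotoneOn_of_deriv_nonneg hI.convex hc hdiff (fun x hx => (hd x hx).deriv.ge) ha hb hab)
    (antitoneOn_of_deriv_nonpos hI.convex hc hdiff (fun x hx => (hd x hx).deriv.le) ha hb hab)

theorem contDiff_one_of_hasDerivAt {f f' : ℝ → ℝ} (hf : ∀ x, HasDerivAt f (f' x) x)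
    (hf' : Continuous f') : ContDiff ℝ 1 f :=
  contDiff_one_iff_deriv.2
    ⟨fun x => (hf x).differentiableAt, by rwa [funext fun x => (hf x).deriv]⟩

theorem contDiffAt_of_eventually_mul_eq {E Y : ℝ → ℝ} {t : ℝ} {n : WithTop ℕ∞}
    (hY : ContDiffAt ℝ n Y t) (ht : t ≠ 0) (hEY : ∀ᶠ τ in 𝓝 t, τ * E τ = Y τ) :
    ContDiffAt ℝ n E t := by
  refine (hY.div contDiffAt_id ht).congr_of_eventuallyEq ?_
  filter_upwards [hEY, eventually_ne_nhds ht] with τ hτ hτ0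
  rw [Pi.div_apply, ← hτ, id, mul_div_cancel_left₀ _ hτ0]

theorem hasDerivAt_mul_exp_neg_two_mul {f : ℝ → ℝ} {f' t : ℝ} (hf : HasDerivAt f f' t) :
    HasDerivAt (fun τ => τ * exp (-2 * f τ)) (-(exp (-2 * f t) * (2 * t * f' - 1))) t :=
  ((hasDerivAt_id' t).mul (hf.const_mul (-2)).exp).congr_deriv (by ring)

theorem field_eq_iff_hasDerivAt {f : ℝ → ℝ} {t a : ℝ} (hf : DifferentiableAt ℝ f t) :
    exp (-2 * f t) * (2 * t * deriv f t - 1) = a ↔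
      HasDerivAt (fun τ => τ * exp (-2 * f τ)) (-a) t := by
  have hY := hasDerivAt_mul_exp_neg_two_mul hf.hasDerivAt
  exact ⟨fun h => h ▸ hY, fun h => neg_injective (hY.unique h)⟩

section LinearEquation

variable {Y g : ℝ → ℝ}

theorem field_eq_neg_half_log (hY : ∀ x, HasDerivAt Y (-g x) x) {E : ℝ → ℝ} {t : ℝ}
    (hE : DifferentiableAt ℝ E t) (hpos : 0 < E t) (hEY : ∀ᶠ τ in 𝓝 t, τ * E τ = Y τ) :
    exp (-2 * (-(1 / 2) * log (E t))) *
      (2 * t * deriv (fun τ => -(1 / 2) * log (E τ)) t - 1) = g t := by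
  have hlog : DifferentiableAt ℝ (fun τ => -(1 / 2) * log (E τ)) t :=
    (hE.log hpos.ne').const_mul _
  refine (field_eq_iff_hasDerivAt hlog).2 ((hY t).congr_of_eventuallyEq ?_)
  filter_upwards [hEY, hE.continuousAt.eventually (lt_mem_nhds hpos)] with τ hτ hEτ
  rw [← hτ, show -2 * (-(1 / 2) * log (E τ)) = log (E τ) by ring, exp_log hEτ]

theorem mul_exp_neg_two_mul_eq_of_field_eq (hY : ∀ x, HasDerivAt Y (-g x) x)
    {I : Set ℝ} (hI : I.OrdConnected) {ν : ℝ → ℝ} (hν : ContDiffOn ℝ 1 ν I)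
    (hνeq : ∀ x ∈ I, exp (-2 * ν x) * (2 * x * deriv ν x - 1) = g x)
    {a t : ℝ} (ha : a ∈ I) (ht : t ∈ I) (hνa : a * exp (-2 * ν a) = Y a) :
    t * exp (-2 * ν t) = Y t := by
  have hYc : Continuous Y := continuous_iff_continuousAt.2 fun x => (hY x).continuousAt
  have hνc := hν.continuousOn
  have hconst := hI.eq_of_hasDerivAt_eq_zero (φ := fun τ => τ * exp (-2 * ν τ) - Y τ)
    (by fun_prop) ?_ ha ht
  · simp only [hνa, sub_self] at hconst
    linarith
  intro x hx
  have hνx : DifferentiableAt ℝ ν x :=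
    (hν.contDiffAt (mem_interior_iff_mem_nhds.1 hx)).differentiableAt one_ne_zero
  have := ((field_eq_iff_hasDerivAt hνx).1 (hνeq x (interior_subset hx))).sub (hY x)
  rwa [neg_sub_neg, sub_self] at this

end LinearEquation

theorem field_equation_explicit_solution_general
    (I : Set ℝ) (hI : I ⊆ Set.Ioi 0) (hord : I.OrdConnected) (h1I : (1:ℝ) ∈ I)
    (k : ℝ)
    (pbar : ℝ → ℝ → ℝ) (hpcont : Continuous (Function.uncurry pbar))
    (μ0 : ℝ → ℝ)
    (E : ℝ → ℝ → ℝ)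
    (hE : ∀ t r, E t r =
      (Real.exp (-2 * μ0 r) + k) / t - k + (8 * Real.pi / t) * ∫ s in t..(1:ℝ), s ^ 2 * pbar s r)
    (hEpos : ∀ t ∈ I, ∀ r : ℝ, 0 < E t r)
    (μ : ℝ → ℝ → ℝ) (hμdef : ∀ t r, μ t r = -(1 / 2) * Real.log (E t r)) :
    -- μ is C¹ in t, attains the data at t = 1, satisfies the field equation,
    (∀ r : ℝ, ContDiffOn ℝ 1 (fun τ => μ τ r) I) ∧
    (∀ r : ℝ, μ 1 r = μ0 r) ∧
    (∀ t ∈ I, ∀ r : ℝ,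
      Real.exp (-2 * μ t r) * (2 * t * deriv (fun τ => μ τ r) t - 1) - k
        = 8 * Real.pi * t ^ 2 * pbar t r) ∧
    -- and it is the unique such function
    (∀ ν : ℝ → ℝ → ℝ,
      (∀ r : ℝ, ContDiffOn ℝ 1 (fun τ => ν τ r) I) →
      (∀ r : ℝ, ν 1 r = μ0 r) →
      (∀ t ∈ I, ∀ r : ℝ,
        Real.exp (-2 * ν t r) * (2 * t * deriv (fun τ => ν τ r) t - 1) - k
          = 8 * Real.pi * t ^ 2 * pbar t r) →
      ∀ t ∈ I, ∀ r : ℝ, ν t r = μ t r) := by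
  have hp r : Continuous fun s => s ^ 2 * pbar s r := by
    have := hpcont.uncurry_right r
    fun_prop
  set Y : ℝ → ℝ → ℝ := fun r τ =>
    exp (-2 * μ0 r) + k - k * τ - 8 * π * ∫ s in (1:ℝ)..τ, s ^ 2 * pbar s r
  have hYd r t : HasDerivAt (Y r) (-(k + 8 * π * t ^ 2 * pbar t r)) t :=
    ((((hasDerivAt_id' t).const_mul k).const_sub (exp (-2 * μ0 r) + k)).sub
      (((hp r).integral_hasStrictDerivAt 1 t).hasDerivAt.const_mul (8 * π))).congr_deriv
      (by ring)
  have hEY r τ (hτ : τ ≠ 0) : τ * E τ r = Y r τ := by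
    rw [hE, intervalIntegral.integral_symm]
    simp only [Y]
    field_simp
    ring
  have hEY' r t (ht : t ∈ I) : ∀ᶠ τ in 𝓝 t, τ * E τ r = Y r τ :=
    (eventually_ne_nhds (hI ht).ne').mono (hEY r)
  have hEC r t (ht : t ∈ I) : ContDiffAt ℝ 1 (fun τ => E τ r) t :=
    contDiffAt_of_eventually_mul_eq
      (contDiff_one_of_hasDerivAt (hYd r) (by fun_prop)).contDiffAt (hI ht).ne' (hEY' r t ht)
  have hμ r : (fun τ => μ τ r) = fun τ => -(1 / 2) * log (E τ r) := funext fun τ => hμdef τ r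
  refine ⟨fun r t ht => ?_, fun r => ?_, fun t ht r => ?_, fun ν hνC hν1 hνeq t ht r => ?_⟩
  · rw [hμ]
    exact (contDiffAt_const.mul ((hEC r t ht).log (hEpos t ht r).ne')).contDiffWithinAt
  · rw [hμdef, hE]
    simp
  · rw [sub_eq_iff_eq_add', hμ, hμdef]
    exact field_eq_neg_half_log (hYd r) ((hEC r t ht).differentiableAt one_ne_zero) (hEpos t ht r)
      (hEY' r t ht)
  · have hνY := mul_exp_neg_two_mul_eq_of_field_eq (hYd r) hord (hνC r)
      (fun x hx => sub_eq_iff_eq_add'.1 (hνeq x hx r)) h1I ht (by simp [Y, hν1])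
    rw [← hEY r t (hI ht).ne'] at hνY
    rw [hμdef, ← mul_left_cancel₀ (hI ht).ne' hνY, log_exp]
    ring

theorem field_equation_explicit_solution
    (I : Set ℝ) (hI : I ⊆ Set.Ioi 0) (hord : I.OrdConnected) (h1I : (1:ℝ) ∈ I)
    (k : ℝ) (hk : k = -1 ∨ k = 0 ∨ k = 1)
    (pbar : ℝ → ℝ → ℝ) (hpcont : Continuous (Function.uncurry pbar))
    (hpnonneg : ∀ t ∈ I, ∀ r : ℝ, 0 ≤ pbar t r)
    (μ0 : ℝ → ℝ) (hμ0 : ContDiff ℝ 1 μ0)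
    (E : ℝ → ℝ → ℝ)
    (hE : ∀ t r, E t r =
      (Real.exp (-2 * μ0 r) + k) / t - k + (8 * Real.pi / t) * ∫ s in t..(1:ℝ), s ^ 2 * pbar s r)
    (hEpos : ∀ t ∈ I, ∀ r : ℝ, 0 < E t r)
    (μ : ℝ → ℝ → ℝ) (hμdef : ∀ t r, μ t r = -(1 / 2) * Real.log (E t r)) :
    -- μ is C¹ in t, attains the data at t = 1, satisfies the field equation,
    (∀ r : ℝ, ContDiffOn ℝ 1 (fun τ => μ τ r) I) ∧
    (∀ r : ℝ, μ 1 r = μ0 r) ∧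
    (∀ t ∈ I, ∀ r : ℝ,
      Real.exp (-2 * μ t r) * (2 * t * deriv (fun τ => μ τ r) t - 1) - k
        = 8 * Real.pi * t ^ 2 * pbar t r) ∧
    -- and it is the unique such function
    (∀ ν : ℝ → ℝ → ℝ,
      (∀ r : ℝ, ContDiffOn ℝ 1 (fun τ => ν τ r) I) →
      (∀ r : ℝ, ν 1 r = μ0 r) →
      (∀ t ∈ I, ∀ r : ℝ,
        Real.exp (-2 * ν t r) * (2 * t * deriv (fun τ => ν τ r) t - 1) - k
          = 8 * Real.pi * t ^ 2 * pbar t r) →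
      ∀ t ∈ I, ∀ r : ℝ, ν t r = μ t r) :=
  field_equation_explicit_solution_general I hI hord h1I k pbar hpcont μ0 E hE hEpos μ hμdef
end

section
/- Let μ, λ : [1,T) × ℝ → ℝ be C¹ with λ(t, r+1) = λ(t,r) and μ(t, r+1) = μ(t,r), and suppose they satisfy μ̇ − λ̇ = (1 + k e^{2μ})/t with k ∈ {−1,0} (the case p = ρ), together with the bound e^{2μ(t,r)} ≥ t/(C − k t) for some C > 0 and all t ∈ [1,T). Then e^{μ(t,r) − λ(t,r)} ≤ e^{μ(1,r) − λ(1,r)} · t · (C − k)/(C − k t) for all t ∈ [1,T); in particular e^{μ−λ} ≤ C' t for a constant C' depending on the data. -/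
/-!
Along each line `r = const`, the function `F = μ - λ - log (t / (C - k t))` is nonincreasing:
its derivative is `k (e^{2μ}/t - 1/(C - k t))`, which is `≤ 0` because `k ≤ 0` and the lower
bound on `e^{2μ}` says exactly that the bracket is nonnegative. Exponentiating `F t ≤ F 1` gives
the first estimate. Since `k ≤ 0` and `t ≥ 1`, the factor `(C - k)/(C - k t)` is at most `1`, and
the periodic continuous function `μ(1, ·) - λ(1, ·)` is bounded above, which gives the second.
-/

open Real Set

theorem sub_le_sub_of_deriv_le {f g g' : ℝ → ℝ} {a b t : ℝ}
    (hf : ContinuousOn f (Ico a b)) (hfd : DifferentiableOn ℝ f (Ioo a b))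
    (hg : ContinuousOn g (Ico a b)) (hg' : ∀ x ∈ Ioo a b, HasDerivAt g (g' x) x)
    (hle : ∀ x ∈ Ioo a b, deriv f x ≤ g' x) (ht : t ∈ Ico a b) :
    f t - f a ≤ g t - g a := by
  have hmono : MonotoneOn (g - f) (Ico a b) := by
    refine monotoneOn_of_deriv_nonneg (convex_Ico a b) (hg.sub hf) ?_ ?_ <;> rw [interior_Ico]
    · exact fun x hx => ((hg' x hx).differentiableAt.sub
        (hfd.differentiableAt (Ioo_mem_nhds hx.1 hx.2))).differentiableWithinAt
    · intro x hx
      rw [deriv_sub (hg' x hx).differentiableAt (hfd.differentiableAt (Ioo_mem_nhds hx.1 hx.2)),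
        (hg' x hx).deriv]
      exact sub_nonneg.2 (hle x hx)
  have := hmono (left_mem_Ico.2 (ht.1.trans_lt ht.2)) ht ht.1
  simp only [Pi.sub_apply] at this
  linarith

section

variable {C k : ℝ}

theorem sub_mul_pos_of_nonpos (hC : 0 < C) (hk : k ≤ 0) {t : ℝ} (ht : 0 ≤ t) :
    0 < C - k * t := by
  nlinarith

theorem hasDerivAt_log_sub_log_sub_mul {t : ℝ} (ht : 0 < t) (hCt : 0 < C - k * t) :
    HasDerivAt (fun τ => log τ - log (C - k * τ)) (t⁻¹ + k / (C - k * t)) t := by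
  have hlin : HasDerivAt (fun τ => C - k * τ) (-k) t := by
    simpa using ((hasDerivAt_id t).const_mul k).const_sub C
  exact ((hasDerivAt_log ht.ne').fun_sub (hlin.log hCt.ne')).congr_deriv (by ring)

theorem one_add_mul_div_le_of_div_le (hk : k ≤ 0) {t E : ℝ} (ht : 0 < t)
    (hE : t / (C - k * t) ≤ E) :
    (1 + k * E) / t ≤ t⁻¹ + k / (C - k * t) := by
  have hdiv : 1 / (C - k * t) ≤ E / t := by
    rwa [le_div_iff₀ ht, div_mul_eq_mul_div, one_mul]
  have hmul : k * (E / t) ≤ k * (1 / (C - k * t)) := mul_le_mul_of_nonpos_left hdiv hk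
  calc (1 + k * E) / t = t⁻¹ + k * (E / t) := by field_simp
    _ ≤ t⁻¹ + k * (1 / (C - k * t)) := by linarith
    _ = t⁻¹ + k / (C - k * t) := by ring

/-- Comparison with the solution `t / (C - k t)` of `(log y)' = 1/t + k/(C - k t)`. -/
theorem exp_le_mul_div_of_deriv_le (hC : 0 < C) (hk : k ≤ 0) {f : ℝ → ℝ} {T : ℝ}
    (hf : ContinuousOn f (Ico 1 T)) (hfd : DifferentiableOn ℝ f (Ioo 1 T))
    (hle : ∀ x ∈ Ioo 1 T, deriv f x ≤ x⁻¹ + k / (C - k * x)) {t : ℝ} (ht : t ∈ Ico 1 T) :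
    exp (f t) ≤ exp (f 1) * t * (C - k) / (C - k * t) := by
  have ht0 : 0 < t := one_pos.trans_le ht.1
  have hCt : 0 < C - k * t := sub_mul_pos_of_nonpos hC hk ht0.le
  have hC1 : 0 < C - k := by simpa using sub_mul_pos_of_nonpos hC hk zero_le_one
  have hg : ∀ x, 1 ≤ x → HasDerivAt (fun τ => log τ - log (C - k * τ))
      (x⁻¹ + k / (C - k * x)) x := fun x hx =>
    hasDerivAt_log_sub_log_sub_mul (one_pos.trans_le hx) (sub_mul_pos_of_nonpos hC hk (by linarith))
  have hcmp := sub_le_sub_of_deriv_le hf hfd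
    (fun x hx => (hg x hx.1).continuousAt.continuousWithinAt)
    (fun x hx => hg x hx.1.le) hle ht
  simp only [log_one, mul_one, zero_sub] at hcmp
  calc exp (f t) ≤ exp (f 1 + (log t - log (C - k * t) + log (C - k))) :=
        exp_le_exp.2 (by linarith)
    _ = exp (f 1) * t * (C - k) / (C - k * t) := by
        rw [exp_add, exp_add, exp_sub, exp_log ht0, exp_log hCt, exp_log hC1]
        ring

theorem mul_sub_div_sub_mul_le (hC : 0 < C) (hk : k ≤ 0) {a t : ℝ} (ha : 0 ≤ a) (ht : 1 ≤ t) :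
    a * t * (C - k) / (C - k * t) ≤ a * t := by
  have hCt : 0 < C - k * t := sub_mul_pos_of_nonpos hC hk (by linarith)
  rw [div_le_iff₀ hCt]
  exact mul_le_mul_of_nonneg_left (by nlinarith) (by positivity)

end

theorem Function.Periodic.exists_forall_le_of_continuous {f : ℝ → ℝ} {c : ℝ}
    (hp : Function.Periodic f c) (hc : c ≠ 0) (hf : Continuous f) : ∃ M, ∀ x, f x ≤ M := by
  obtain ⟨M, hM⟩ := (hp.isBounded_of_continuous hc hf).bddAbove
  exact ⟨M, fun x => hM (mem_range_self x)⟩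

theorem exp_mu_minus_lambda_estimate_general
    (T C k : ℝ) (hC : 0 < C) (hk : k = -1 ∨ k = 0)
    (μ lam : ℝ → ℝ → ℝ)
    (hμC1 : ∀ r : ℝ, ContDiffOn ℝ 1 (fun τ => μ τ r) (Set.Ico 1 T))
    (hlamC1 : ∀ r : ℝ, ContDiffOn ℝ 1 (fun τ => lam τ r) (Set.Ico 1 T))
    (hμper : ∀ t r, μ t (r + 1) = μ t r)
    (hlamper : ∀ t r, lam t (r + 1) = lam t r)
    (hcont1 : Continuous (fun r => μ 1 r - lam 1 r))
    (hrel : ∀ t ∈ Set.Ico (1:ℝ) T, ∀ r : ℝ,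
      deriv (fun τ => μ τ r) t - deriv (fun τ => lam τ r) t
        = (1 + k * Real.exp (2 * μ t r)) / t)
    (hbound : ∀ t ∈ Set.Ico (1:ℝ) T, ∀ r : ℝ,
      t / (C - k * t) ≤ Real.exp (2 * μ t r)) :
    (∀ t ∈ Set.Ico (1:ℝ) T, ∀ r : ℝ,
      Real.exp (μ t r - lam t r)
        ≤ Real.exp (μ 1 r - lam 1 r) * t * (C - k) / (C - k * t)) ∧
    (∃ C' > (0:ℝ), ∀ t ∈ Set.Ico (1:ℝ) T, ∀ r : ℝ,
      Real.exp (μ t r - lam t r) ≤ C' * t) := by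
  have hk0 : k ≤ 0 := by rcases hk with rfl | rfl <;> norm_num
  have main : ∀ t ∈ Ico (1:ℝ) T, ∀ r : ℝ,
      exp (μ t r - lam t r) ≤ exp (μ 1 r - lam 1 r) * t * (C - k) / (C - k * t) := by
    intro t ht r
    have hdiff := ((hμC1 r).sub (hlamC1 r)).differentiableOn one_ne_zero
    refine exp_le_mul_div_of_deriv_le hC hk0 ((hμC1 r).sub (hlamC1 r)).continuousOn
      (hdiff.mono Ioo_subset_Ico_self) (fun x hx => ?_) ht
    have hnhds : Ico 1 T ∈ nhds x := Ico_mem_nhds hx.1 hx.2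
    replace hx : x ∈ Ico 1 T := Ioo_subset_Ico_self hx
    rw [deriv_fun_sub (((hμC1 r).differentiableOn one_ne_zero).differentiableAt hnhds)
      (((hlamC1 r).differentiableOn one_ne_zero).differentiableAt hnhds), hrel x hx r]
    exact one_add_mul_div_le_of_div_le hk0 (one_pos.trans_le hx.1) (hbound x hx r)
  refine ⟨main, ?_⟩
  have hper : Function.Periodic (fun r => μ 1 r - lam 1 r) 1 := fun r => by
    simp only [hμper, hlamper]
  obtain ⟨M, hM⟩ := hper.exists_forall_le_of_continuous one_ne_zero hcont1
  refine ⟨exp M, exp_pos M, fun t ht r => ?_⟩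
  calc exp (μ t r - lam t r) ≤ exp (μ 1 r - lam 1 r) * t * (C - k) / (C - k * t) := main t ht r
    _ ≤ exp (μ 1 r - lam 1 r) * t := mul_sub_div_sub_mul_le hC hk0 (exp_pos _).le ht.1
    _ ≤ exp M * t := by gcongr; exacts [by linarith [ht.1], hM r]

theorem exp_mu_minus_lambda_estimate
    (T C k : ℝ) (hT : 1 < T) (hC : 0 < C) (hk : k = -1 ∨ k = 0)
    (μ lam : ℝ → ℝ → ℝ)
    (hμC1 : ∀ r : ℝ, ContDiffOn ℝ 1 (fun τ => μ τ r) (Set.Ico 1 T))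
    (hlamC1 : ∀ r : ℝ, ContDiffOn ℝ 1 (fun τ => lam τ r) (Set.Ico 1 T))
    (hμper : ∀ t r, μ t (r + 1) = μ t r)
    (hlamper : ∀ t r, lam t (r + 1) = lam t r)
    (hcont1 : Continuous (fun r => μ 1 r - lam 1 r))
    (hrel : ∀ t ∈ Set.Ico (1:ℝ) T, ∀ r : ℝ,
      deriv (fun τ => μ τ r) t - deriv (fun τ => lam τ r) t
        = (1 + k * Real.exp (2 * μ t r)) / t)
    (hbound : ∀ t ∈ Set.Ico (1:ℝ) T, ∀ r : ℝ,
      t / (C - k * t) ≤ Real.exp (2 * μ t r)) :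
    (∀ t ∈ Set.Ico (1:ℝ) T, ∀ r : ℝ,
      Real.exp (μ t r - lam t r)
        ≤ Real.exp (μ 1 r - lam 1 r) * t * (C - k) / (C - k * t)) ∧
    (∃ C' > (0:ℝ), ∀ t ∈ Set.Ico (1:ℝ) T, ∀ r : ℝ,
      Real.exp (μ t r - lam t r) ≤ C' * t) :=
  exp_mu_minus_lambda_estimate_general T C k hC hk μ lam hμC1 hlamC1 hμper hlamper hcont1 hrel
    hbound
end
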